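/- There exist x : ℝ² → ℝ^{D−2} with D−2 ≥ 2 and a nonzero V ∈ ℝ² ⊗ ℝ^{D−2} such that the induced metric γ(x)_{ab} is positive definite but L^{ab}_{mn} V_a^m V_b^n = 0; i.e. the symbol of L is degenerate. Explicitly, with w ≡ 1, x¹ = σ¹, x² = σ², all other components of x zero (so γ_{ab} = δ_{ab}), and V with V¹_2 = 1 and all other components zero, one has L^{ab}_{mn} V_a^m V_b^n = 0. -/
import Mathlib


/-- Partial derivative in the `a`-th coordinate direction on `ℝ²`. -/
noncomputable def pd (a : Fin 2) (f : (Fin 2 → ℝ) → ℝ) (q : Fin 2 → ℝ) : ℝ :=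
  fderiv ℝ f q (Pi.single a 1)

/-- The 2×2 antisymmetric (Levi-Civita) symbol. -/
def eps : Fin 2 → Fin 2 → ℝ := fun a b =>
  if a = 0 ∧ b = 1 then 1 else if a = 1 ∧ b = 0 then -1 else 0

/-- The induced metric `γ_{ab} = ∂_a x^m ∂_b x_m`. -/
noncomputable def gmat (dm : ℕ) (x : Fin dm → (Fin 2 → ℝ) → ℝ) (q : Fin 2 → ℝ) :
    Matrix (Fin 2) (Fin 2) ℝ :=
  Matrix.of fun a b => ∑ m, pd a (x m) q * pd b (x m) q

/-- The principal symbol coefficients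
`L^{ab}_{mn} = (1/w)(γ γ^{ab} δ_{mn} − ∈^{ac}∈^{bd} ∂_c x_m ∂_d x_n)`. -/
noncomputable def Lsym (dm : ℕ) (w : (Fin 2 → ℝ) → ℝ) (x : Fin dm → (Fin 2 → ℝ) → ℝ)
    (q : Fin 2 → ℝ) (a b : Fin 2) (m n : Fin dm) : ℝ :=
  (1 / w q) * ((gmat dm x q).det * (gmat dm x q)⁻¹ a b * (if m = n then 1 else 0)
    - ∑ c : Fin 2, ∑ d : Fin 2, eps a c * eps b d * pd c (x m) q * pd d (x n) q)


lemma pd_proj (a m : Fin 2) (q : Fin 2 → ℝ) :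
    pd a (fun q => q m) q = if m = a then 1 else 0 := by
  have : (fun q : Fin 2 → ℝ => q m) = (ContinuousLinearMap.proj m : (Fin 2 → ℝ) →L[ℝ] ℝ) := rfl
  rw [pd, this, ContinuousLinearMap.fderiv]
  simp [Pi.single_apply]

lemma gmat_one (q : Fin 2 → ℝ) : gmat 2 (fun m q => q m) q = 1 := by
  ext a b
  simp only [gmat, Matrix.of_apply, pd_proj, Matrix.one_apply]
  fin_cases a <;> fin_cases b <;> simp [Fin.sum_univ_two]

/-- The symbol of `L` is degenerate: with `D−2 = 2`, `w ≡ 1`, there are a smooth `x` (namely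
`x¹ = σ¹`, `x² = σ²`, so that `γ_{ab} = δ_{ab}` is positive definite) and a nonzero `V`
(namely `V¹_2 = 1`, all other components zero) with `L^{ab}_{mn} V_a^m V_b^n = 0`. -/
theorem symbol_is_degenerate :
    ∃ (x : Fin 2 → (Fin 2 → ℝ) → ℝ) (V : Fin 2 → Fin 2 → ℝ),
      (∀ m, ContDiff ℝ (⊤ : ℕ∞) (x m)) ∧ V ≠ 0
      ∧ (∀ m q, x m q = q m)
      ∧ (∀ a m, V a m = if a = 0 ∧ m = 1 then 1 else 0)
      ∧ (∀ q, (gmat 2 x q).PosDef)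
      ∧ (∀ q, ∑ a : Fin 2, ∑ b : Fin 2, ∑ m : Fin 2, ∑ n : Fin 2,
          Lsym 2 (fun _ => 1) x q a b m n * V a m * V b n = 0) := by
  refine ⟨fun m q => q m, fun a m => if a = 0 ∧ m = 1 then 1 else 0,
    fun m => contDiff_pi.mp contDiff_id m, ?_, fun _ _ => rfl, fun _ _ => rfl, ?_, ?_⟩
  · intro h
    have := congrFun (congrFun h 0) 1
    simp at this
  · intro q
    rw [gmat_one]
    exact Matrix.PosDef.one
  · intro q
    have hL : ∀ a b m n, Lsym 2 (fun _ => 1) (fun m q => q m) q a b m n =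
        ((if a = b then 1 else 0) * (if m = n then 1 else 0)
          - ∑ c : Fin 2, ∑ d : Fin 2, eps a c * eps b d * (if (m:Fin 2) = c then 1 else 0)
            * (if (n:Fin 2) = d then 1 else 0)) := by
      intro a b m n
      simp [Lsym, gmat_one, pd_proj, Matrix.one_apply]
    simp only [hL]
    norm_num [Fin.sum_univ_two, eps]
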